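/- Assume the hypotheses of the cone proposition (gradient bound with constants r_{a,1}, r_{a,2} and the conditions on λ_s), and assume additionally that for every η ∈ (0,1), b₁ ‖θ_η‖₂² − r_{b,2} ‖θ_η‖₂ − r_{b,1} ≤ Σ_{i=1}^n λ_o √n ŵ'_i {−h(r_{β*+θ_η,i}) + h(r_{β*,i})} X̃_iᵀ θ_η, where b₁ > 0 and r_{b,1}, r_{b,2} ≥ 0, and that (r_{b,2} + C_{λ_s} + √(b₁ r_{b,1}))/b₁ < r with C_{λ_s} = r_{a,2} + 3(r_{a,1} + λ_s)√s. Then the minimizer β̂ of the weighted ℓ₁-penalized Huber objective satisfies ‖β̂ − β*‖₂ ≤ r. -/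

import Mathlib

/-!
Write `θ = β̂ - β*`, `S` for the support of `β*` and `L` for the Huber part of the objective.
Convexity of `L` between `β̂` and `β* + ηθ`, minimality of `β̂`, and decomposability of the
`ℓ₁` norm over `S` give the cone inequality `⟨-∇L(β* + ηθ), θ⟩ ≤ λ_s (‖θ_S‖₁ - ‖θ_{Sᶜ}‖₁)`.
Feeding it into the lower bound at `β* + ηθ` and the gradient bound at `β*`, with
`‖θ_S‖₁ ≤ √s ‖θ‖₂` and `r_{a,1} ≤ λ_s`, yields a quadratic inequality `b₁ t² ≤ C t + r_{b,1}`
for `t = η ‖θ‖₂`, hence `η ‖θ‖₂ ≤ (C + √(b₁ r_{b,1})) / b₁` for every `η < 1`; let `η → 1`.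
-/

open MeasureTheory ProbabilityTheory Matrix Finset Real

noncomputable section

namespace RobustSparse

/-- coordinatewise truncation at level `τ`: `x̃ⱼ = sgn(xⱼ) * min |xⱼ| τ`. -/
def trunc {d : ℕ} (τ : ℝ) (x : Fin d → ℝ) : Fin d → ℝ :=
  fun j => Real.sign (x j) * min |x j| τ

/-- derivative of the Huber loss: `h(t) = t` for `|t| ≤ 1`, `sgn(t)` otherwise. -/
def hub (t : ℝ) : ℝ := if |t| ≤ 1 then t else Real.sign t

/-- the Huber loss. -/
def Huber (t : ℝ) : ℝ := if |t| ≤ 1 then t ^ 2 / 2 else |t| - 1 / 2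

/-- ℓ1 norm of a vector. -/
def l1 {d : ℕ} (v : Fin d → ℝ) : ℝ := ∑ j, |v j|

/-- ℓ2 norm of a vector. -/
def l2 {d : ℕ} (v : Fin d → ℝ) : ℝ := Real.sqrt (∑ j, v j ^ 2)

/-- euclidean inner product. -/
def ip {d : ℕ} (a b : Fin d → ℝ) : ℝ := ∑ j, a j * b j

/-- entrywise ℓ1 norm of a matrix. -/
def mat1 {d : ℕ} (M : Matrix (Fin d) (Fin d) ℝ) : ℝ := ∑ i, ∑ j, |M i j|

/-- Frobenius inner product `⟨A,B⟩ = Tr(AᵀB)`. -/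
def minner {d : ℕ} (A B : Matrix (Fin d) (Fin d) ℝ) : ℝ := ∑ i, ∑ j, A i j * B i j

/-- the constraint set `𝔐_r = {M : Tr M ≤ r², M ⪰ 0}`. -/
def Mr (d : ℕ) (r : ℝ) : Set (Matrix (Fin d) (Fin d) ℝ) :=
  {M | M.trace ≤ r ^ 2 ∧ M.PosSemidef}

/-- ℓ2 → ℓ2 operator norm of a matrix. -/
def opNorm {d : ℕ} (M : Matrix (Fin d) (Fin d) ℝ) : ℝ :=
  ‖Matrix.toEuclideanCLM (𝕜 := ℝ) M‖

/-- the constrained probability simplex `Δ^{n-1}`. -/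
def simplex (n : ℕ) (ε : ℝ) : Set (Fin n → ℝ) :=
  {w | (∀ i, 0 ≤ w i ∧ w i ≤ 1) ∧ ∑ i, w i = 1 ∧ ∀ i, |w i| ≤ 1 / (n * (1 - ε))}

/-- an i.i.d. (independent, identically distributed, measurable) family. -/
def IsIID {Ω E : Type*} [MeasurableSpace Ω] [MeasurableSpace E]
    (μ : Measure Ω) {n : ℕ} (f : Fin n → Ω → E) : Prop :=
  (∀ i, Measurable (f i)) ∧ iIndepFun f μ ∧
    ∀ i j, Measure.map (f i) μ = Measure.map (f j) μ

theorem hub_mul_sub_le_Huber_sub (a b : ℝ) : hub b * (a - b) ≤ Huber a - Huber b := by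
  unfold hub Huber
  rcases le_or_gt |b| 1 with hb | hb
  · rcases le_or_gt |a| 1 with ha | ha
    · simp only [if_pos ha, if_pos hb]
      nlinarith [sq_nonneg (a - b)]
    · simp only [if_pos hb, if_neg (not_le.2 ha)]
      nlinarith [abs_mul_abs_self b, le_abs_self (a * b), abs_mul a b,
        mul_nonneg (sub_nonneg.2 hb) (sub_nonneg.2 ha.le), sq_nonneg (1 - |b|)]
  · simp only [if_neg (not_le.2 hb)]
    rcases lt_or_gt_of_ne (abs_pos.1 (one_pos.trans hb)) with hneg | hpos
    · rw [Real.sign_of_neg hneg, abs_of_neg hneg]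
      split_ifs with ha
      · nlinarith [sq_nonneg (a + 1)]
      · linarith [neg_abs_le a]
    · rw [Real.sign_of_pos hpos, abs_of_pos hpos]
      split_ifs with ha
      · nlinarith [sq_nonneg (a - 1)]
      · linarith [le_abs_self a]

section Norms

variable {d : ℕ}

theorem ip_smul (x a : Fin d → ℝ) (c : ℝ) : ip x (c • a) = c * ip x a := dotProduct_smul c x a

theorem ip_sub (x a b : Fin d → ℝ) : ip x (a - b) = ip x a - ip x b := dotProduct_sub x a b

theorem l1_smul (c : ℝ) (v : Fin d → ℝ) : l1 (c • v) = |c| * l1 v := by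
  simp only [l1, Pi.smul_apply, smul_eq_mul, abs_mul, mul_sum]

theorem l2_smul {c : ℝ} (hc : 0 ≤ c) (v : Fin d → ℝ) : l2 (c • v) = c * l2 v := by
  simp only [l2, Pi.smul_apply, smul_eq_mul, mul_pow, ← mul_sum]
  rw [Real.sqrt_mul (sq_nonneg c), Real.sqrt_sq hc]

theorem l2_nonneg (v : Fin d → ℝ) : 0 ≤ l2 v := Real.sqrt_nonneg _

theorem sum_abs_le_sqrt_card_mul_l2 (S : Finset (Fin d)) (v : Fin d → ℝ) :
    ∑ j ∈ S, |v j| ≤ √(#S : ℝ) * l2 v := by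
  rw [l2, ← Real.sqrt_mul (Nat.cast_nonneg _)]
  refine Real.le_sqrt_of_sq_le ((sq_sum_le_card_mul_sum_sq ..).trans ?_)
  gcongr
  simp only [sq_abs]
  exact sum_le_sum_of_subset_of_nonneg (subset_univ S) fun j _ _ => sq_nonneg _

theorem l1_add_smul_sub_l1_add_le {βstar : Fin d → ℝ} {S : Finset (Fin d)}
    (hS : ∀ j ∉ S, βstar j = 0) (θ : Fin d → ℝ) {η : ℝ} (hη0 : 0 ≤ η) (hη1 : η ≤ 1) :
    l1 (βstar + η • θ) - l1 (βstar + θ) ≤ (1 - η) * (∑ j ∈ S, |θ j| - ∑ j ∈ Sᶜ, |θ j|) := by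
  have on_S : ∀ j ∈ S, |βstar j + η * θ j| - |βstar j + θ j| ≤ (1 - η) * |θ j| := by
    intro j _
    calc |βstar j + η * θ j| - |βstar j + θ j| ≤ |(βstar j + η * θ j) - (βstar j + θ j)| :=
          abs_sub_abs_le_abs_sub _ _
      _ = (1 - η) * |θ j| := by
          rw [show βstar j + η * θ j - (βstar j + θ j) = -((1 - η) * θ j) by ring, abs_neg,
            abs_mul, abs_of_nonneg (by linarith)]
  have off_S : ∀ j ∈ Sᶜ, |βstar j + η * θ j| - |βstar j + θ j| = -((1 - η) * |θ j|) := by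
    intro j hj
    rw [hS j (mem_compl.1 hj), zero_add, zero_add, abs_mul, abs_of_nonneg hη0]
    ring
  calc l1 (βstar + η • θ) - l1 (βstar + θ)
      = ∑ j ∈ S, (|βstar j + η * θ j| - |βstar j + θ j|)
        + ∑ j ∈ Sᶜ, (|βstar j + η * θ j| - |βstar j + θ j|) := by
        rw [sum_add_sum_compl, l1, l1, ← sum_sub_distrib]; rfl
    _ ≤ ∑ j ∈ S, (1 - η) * |θ j| + ∑ j ∈ Sᶜ, -((1 - η) * |θ j|) :=
        add_le_add (sum_le_sum on_S) (sum_congr rfl off_S).le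
    _ = _ := by rw [sum_neg_distrib, ← mul_sum, ← mul_sum]; ring

end Norms

theorem le_add_sqrt_div_of_mul_sq_le {b C c t : ℝ} (hb : 0 < b) (hC : 0 ≤ C) (hc : 0 ≤ c)
    (h : b * t ^ 2 ≤ C * t + c) : t ≤ (C + √(b * c)) / b := by
  have hq : √(b * c) ^ 2 = b * c := Real.sq_sqrt (by positivity)
  rw [le_div_iff₀ hb]
  by_contra! hlt
  have hpos : 0 < b * t + √(b * c) := by linarith [Real.sqrt_nonneg (b * c)]
  nlinarith [mul_pos (sub_pos.2 hlt) hpos, mul_nonneg hC (Real.sqrt_nonneg (b * c))]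

open Filter Topology in
theorem le_of_forall_mem_Ioo_mul_le {t R : ℝ} (h : ∀ η, 0 < η → η < 1 → η * t ≤ R) : t ≤ R := by
  have hlim : Tendsto (fun η : ℝ => η * t) (𝓝[<] 1) (𝓝 t) := by
    simpa using ((continuous_mul_const t).tendsto 1).mono_left nhdsWithin_le_nhds
  refine le_of_tendsto hlim (mem_of_superset (Ioo_mem_nhdsLT one_pos) ?_)
  exact fun η hη => h η hη.1 hη.2

section HuberRegression

variable {n d : ℕ} (y : Fin n → ℝ) (Xt : Fin n → Fin d → ℝ) (w' : Fin n → ℝ) (lamo : ℝ)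

def resid (v : Fin d → ℝ) (i : Fin n) : ℝ := w' i * n * (y i - ip (Xt i) v) / (lamo * √n)

def huberLoss (v : Fin d → ℝ) : ℝ := ∑ i, lamo ^ 2 * Huber (resid y Xt w' lamo v i)

/-- `huberScore v u = -⟨∇ huberLoss v, u⟩`. -/
def huberScore (v u : Fin d → ℝ) : ℝ :=
  ∑ i, lamo * √n * w' i * hub (resid y Xt w' lamo v i) * ip (Xt i) u

variable {y Xt w' lamo}

theorem huberScore_smul (v u : Fin d → ℝ) (c : ℝ) :
    huberScore y Xt w' lamo v (c • u) = c * huberScore y Xt w' lamo v u := by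
  simp only [huberScore, ip_smul, mul_sum]
  exact sum_congr rfl fun i _ => by ring

theorem huberScore_eq_mul_sum (v u : Fin d → ℝ) :
    huberScore y Xt w' lamo v u
      = lamo * √n * ∑ i, w' i * hub (resid y Xt w' lamo v i) * ip (Xt i) u := by
  rw [huberScore, mul_sum]
  exact sum_congr rfl fun i _ => by ring

theorem huberScore_sub_huberScore (v v' u : Fin d → ℝ) :
    huberScore y Xt w' lamo v u - huberScore y Xt w' lamo v' u
      = ∑ i, lamo * √n * w' i
          * (-hub (resid y Xt w' lamo v' i) + hub (resid y Xt w' lamo v i)) * ip (Xt i) u := by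
  rw [huberScore, huberScore, ← sum_sub_distrib]
  exact sum_congr rfl fun i _ => by ring

theorem neg_huberScore_le_huberLoss_sub (hlamo : lamo ≠ 0) (u v : Fin d → ℝ) :
    -huberScore y Xt w' lamo v (u - v) ≤ huberLoss y Xt w' lamo u - huberLoss y Xt w' lamo v := by
  rw [huberScore, huberLoss, huberLoss, ← sum_sub_distrib, ← sum_neg_distrib]
  refine sum_le_sum fun i _ => ?_
  have hscale : ∀ x, w' i * n * x / (lamo * √n) = √n * w' i * x / lamo := fun x => by
    calc w' i * n * x / (lamo * √n) = n / √n * w' i * x / lamo := by ring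
      _ = √n * w' i * x / lamo := by rw [Real.div_sqrt]
  have hres : resid y Xt w' lamo u i - resid y Xt w' lamo v i
      = -(√n * w' i * ip (Xt i) (u - v) / lamo) := by
    rw [resid, resid, hscale, hscale, ip_sub]
    ring
  have := mul_le_mul_of_nonneg_left
    (hub_mul_sub_le_Huber_sub (resid y Xt w' lamo u i) (resid y Xt w' lamo v i)) (sq_nonneg lamo)
  rw [hres, mul_sub] at this
  convert this using 1
  field_simp

theorem neg_huberScore_le_of_minimizer (hlamo : lamo ≠ 0) {lams : ℝ} (hlams : 0 ≤ lams)
    {βhat βstar : Fin d → ℝ} {S : Finset (Fin d)} (hS : ∀ j ∉ S, βstar j = 0)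
    (hmin : ∀ β, huberLoss y Xt w' lamo βhat + lams * l1 βhat
      ≤ huberLoss y Xt w' lamo β + lams * l1 β)
    {η : ℝ} (hη0 : 0 ≤ η) (hη1 : η < 1) :
    -huberScore y Xt w' lamo (βstar + η • (βhat - βstar)) (βhat - βstar)
      ≤ lams * (∑ j ∈ S, |(βhat - βstar) j| - ∑ j ∈ Sᶜ, |(βhat - βstar) j|) := by
  set θ := βhat - βstar
  set W := βstar + η • θ
  have hβhat : βstar + θ = βhat := add_sub_cancel βstar βhat
  have hstep : βhat - W = (1 - η) • θ := by
    rw [← hβhat]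
    module
  have hl1 := l1_add_smul_sub_l1_add_le hS θ hη0 hη1.le
  rw [hβhat] at hl1
  refine le_of_mul_le_mul_left ?_ (sub_pos.2 hη1)
  calc (1 - η) * -huberScore y Xt w' lamo W θ = -huberScore y Xt w' lamo W (βhat - W) := by
        rw [hstep, huberScore_smul]; ring
    _ ≤ huberLoss y Xt w' lamo βhat - huberLoss y Xt w' lamo W :=
        neg_huberScore_le_huberLoss_sub hlamo _ _
    _ ≤ lams * (l1 W - l1 βhat) := by linarith [hmin W]
    _ ≤ lams * ((1 - η) * (∑ j ∈ S, |θ j| - ∑ j ∈ Sᶜ, |θ j|)) := by gcongr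
    _ = (1 - η) * (lams * (∑ j ∈ S, |θ j| - ∑ j ∈ Sᶜ, |θ j|)) := by ring

theorem mul_l2_sub_le_of_score_bounds (hlamo : lamo ≠ 0) {lams ra1 ra2 b1 rb1 rb2 : ℝ} {s : ℕ}
    {βhat βstar : Fin d → ℝ} {S : Finset (Fin d)} (hS : ∀ j ∉ S, βstar j = 0) (hcard : #S ≤ s)
    (hmin : ∀ β, huberLoss y Xt w' lamo βhat + lams * l1 βhat
      ≤ huberLoss y Xt w' lamo β + lams * l1 β)
    (hra1 : 0 ≤ ra1) (hra2 : 0 ≤ ra2) (hra1lams : ra1 ≤ lams)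
    (hb1 : 0 < b1) (hrb1 : 0 ≤ rb1) (hrb2 : 0 ≤ rb2) {η : ℝ} (hη0 : 0 < η) (hη1 : η < 1)
    (hgrad : huberScore y Xt w' lamo βstar (η • (βhat - βstar))
      ≤ ra2 * l2 (η • (βhat - βstar)) + ra1 * l1 (η • (βhat - βstar)))
    (hlower : b1 * l2 (η • (βhat - βstar)) ^ 2 - rb2 * l2 (η • (βhat - βstar)) - rb1
      ≤ huberScore y Xt w' lamo βstar (η • (βhat - βstar))
        - huberScore y Xt w' lamo (βstar + η • (βhat - βstar)) (η • (βhat - βstar))) :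
    η * l2 (βhat - βstar) ≤ (rb2 + (ra2 + 3 * (ra1 + lams) * √s) + √(b1 * rb1)) / b1 := by
  set θ := βhat - βstar
  set P := ∑ j ∈ S, |θ j|
  set Q := ∑ j ∈ Sᶜ, |θ j|
  have hbasic : -huberScore y Xt w' lamo (βstar + η • θ) θ ≤ lams * (P - Q) :=
    neg_huberScore_le_of_minimizer hlamo (hra1.trans hra1lams) hS hmin hη0.le hη1
  have hl2 : l2 (η • θ) = η * l2 θ := l2_smul hη0.le θ
  have hl1 : l1 (η • θ) = η * (P + Q) := by
    rw [l1_smul, abs_of_pos hη0, l1, ← sum_add_sum_compl S]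
  have hP : P ≤ √s * l2 θ := (sum_abs_le_sqrt_card_mul_l2 S θ).trans <|
    mul_le_mul_of_nonneg_right (Real.sqrt_le_sqrt (by exact_mod_cast hcard)) (l2_nonneg θ)
  have hQ : 0 ≤ Q := sum_nonneg fun j _ => abs_nonneg _
  have hlam : 0 ≤ ra1 + lams := by linarith
  have hcone : η * ((ra1 + lams) * P) ≤ (ra1 + lams) * √s * l2 (η • θ) := by
    rw [hl2]
    nlinarith [mul_le_mul_of_nonneg_left hP (mul_nonneg hη0.le hlam)]
  have hquad : b1 * l2 (η • θ) ^ 2 ≤ (rb2 + (ra2 + 3 * (ra1 + lams) * √s)) * l2 (η • θ) + rb1 := by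
    rw [huberScore_smul (βstar + η • θ) θ η] at hlower
    rw [hl1] at hgrad
    nlinarith [mul_le_mul_of_nonneg_left hbasic hη0.le, mul_nonneg hη0.le hQ,
      mul_nonneg (mul_nonneg hlam (Real.sqrt_nonneg s)) (l2_nonneg (η • θ))]
  rw [← hl2]
  exact le_add_sqrt_div_of_mul_sq_le hb1 (by positivity) hrb1 hquad

end HuberRegression

theorem statement10_general
    {d n s : ℕ}
    (y : Fin n → ℝ) (Xt : Fin n → Fin d → ℝ)
    (w' : Fin n → ℝ)
    (βstar : Fin d → ℝ) (hs : (Finset.univ.filter fun j => βstar j ≠ 0).card = s)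
    (lamo lams : ℝ) (hlamo : 0 < lamo)
    (βhat : Fin d → ℝ)
    (hmin : ∀ β : Fin d → ℝ,
      (∑ i, lamo ^ 2 * Huber (n * w' i * (y i - ip (Xt i) βhat) / (lamo * Real.sqrt n))
          + lams * l1 βhat)
        ≤ ∑ i, lamo ^ 2 * Huber (n * w' i * (y i - ip (Xt i) β) / (lamo * Real.sqrt n))
          + lams * l1 β)
    (ra1 ra2 : ℝ) (hra1 : 0 ≤ ra1) (hra2 : 0 ≤ ra2)
    (hgrad : ∀ η : ℝ, 0 < η → η < 1 →
      |lamo * Real.sqrt n * ∑ i, w' i *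
          hub (w' i * n * (y i - ip (Xt i) βstar) / (lamo * Real.sqrt n))
          * ip (Xt i) (fun j => η * (βhat j - βstar j))|
        ≤ ra2 * l2 (fun j => η * (βhat j - βstar j))
          + ra1 * l1 (fun j => η * (βhat j - βstar j)))
    (hCs1 : 0 < lams - (ra2 / Real.sqrt s + ra1))
    (b1 rb1 rb2 : ℝ) (hb1 : 0 < b1) (hrb1 : 0 ≤ rb1) (hrb2 : 0 ≤ rb2)
    (hlower : ∀ η : ℝ, 0 < η → η < 1 →
      b1 * l2 (fun j => η * (βhat j - βstar j)) ^ 2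
          - rb2 * l2 (fun j => η * (βhat j - βstar j)) - rb1
        ≤ ∑ i, lamo * Real.sqrt n * w' i *
            (- hub (w' i * n *
                (y i - ip (Xt i) (fun j => βstar j + η * (βhat j - βstar j)))
                  / (lamo * Real.sqrt n))
              + hub (w' i * n * (y i - ip (Xt i) βstar) / (lamo * Real.sqrt n)))
            * ip (Xt i) (fun j => η * (βhat j - βstar j)))
    (r : ℝ)
    (hrlow : (rb2 + (ra2 + 3 * (ra1 + lams) * Real.sqrt s) + Real.sqrt (b1 * rb1)) / b1 < r) :
    l2 (fun j => βhat j - βstar j) ≤ r := by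
  have hmin' : ∀ β, huberLoss y Xt w' lamo βhat + lams * l1 βhat
      ≤ huberLoss y Xt w' lamo β + lams * l1 β := fun β => by
    simpa only [huberLoss, resid, mul_comm (w' _)] using hmin β
  have hra1lams : ra1 ≤ lams := by linarith [div_nonneg hra2 (Real.sqrt_nonneg s)]
  refine (le_of_forall_mem_Ioo_mul_le fun η hη0 hη1 => ?_).trans hrlow.le
  exact mul_l2_sub_le_of_score_bounds hlamo.ne' (S := {j | βstar j ≠ 0})
    (fun j hj => by simpa using hj) hs.le hmin' hra1 hra2 hra1lams hb1 hrb1 hrb2 hη0 hη1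
    ((huberScore_eq_mul_sum _ _).trans_le ((le_abs_self _).trans (hgrad η hη0 hη1)))
    ((hlower η hη0 hη1).trans_eq (huberScore_sub_huberScore _ _ _).symm)

/-- Proposition: deterministic ℓ2 error bound given the cone
hypotheses and the strong-convexity lower bound. -/
theorem statement10
    {d n s : ℕ} (hn : 0 < n)
    (y : Fin n → ℝ) (Xt : Fin n → Fin d → ℝ)
    (w' : Fin n → ℝ) (hw' : ∀ i, w' i = 0 ∨ w' i = 1 / n)
    (βstar : Fin d → ℝ) (hs : (Finset.univ.filter fun j => βstar j ≠ 0).card = s)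
    (lamo lams : ℝ) (hlamo : 0 < lamo) (hlams : 0 < lams)
    (βhat : Fin d → ℝ)
    (hmin : ∀ β : Fin d → ℝ,
      (∑ i, lamo ^ 2 * Huber (n * w' i * (y i - ip (Xt i) βhat) / (lamo * Real.sqrt n))
          + lams * l1 βhat)
        ≤ ∑ i, lamo ^ 2 * Huber (n * w' i * (y i - ip (Xt i) β) / (lamo * Real.sqrt n))
          + lams * l1 β)
    (ra1 ra2 : ℝ) (hra1 : 0 ≤ ra1) (hra2 : 0 ≤ ra2)
    (hgrad : ∀ η : ℝ, 0 < η → η < 1 →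
      |lamo * Real.sqrt n * ∑ i, w' i *
          hub (w' i * n * (y i - ip (Xt i) βstar) / (lamo * Real.sqrt n))
          * ip (Xt i) (fun j => η * (βhat j - βstar j))|
        ≤ ra2 * l2 (fun j => η * (βhat j - βstar j))
          + ra1 * l1 (fun j => η * (βhat j - βstar j)))
    (hCs1 : 0 < lams - (ra2 / Real.sqrt s + ra1))
    (hCs2 : (lams + (ra2 / Real.sqrt s + ra1)) / (lams - (ra2 / Real.sqrt s + ra1)) ≤ 2)
    (b1 rb1 rb2 : ℝ) (hb1 : 0 < b1) (hrb1 : 0 ≤ rb1) (hrb2 : 0 ≤ rb2)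
    (hlower : ∀ η : ℝ, 0 < η → η < 1 →
      b1 * l2 (fun j => η * (βhat j - βstar j)) ^ 2
          - rb2 * l2 (fun j => η * (βhat j - βstar j)) - rb1
        ≤ ∑ i, lamo * Real.sqrt n * w' i *
            (- hub (w' i * n *
                (y i - ip (Xt i) (fun j => βstar j + η * (βhat j - βstar j)))
                  / (lamo * Real.sqrt n))
              + hub (w' i * n * (y i - ip (Xt i) βstar) / (lamo * Real.sqrt n)))
            * ip (Xt i) (fun j => η * (βhat j - βstar j)))
    (r : ℝ)
    (hrlow : (rb2 + (ra2 + 3 * (ra1 + lams) * Real.sqrt s) + Real.sqrt (b1 * rb1)) / b1 < r) :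
    l2 (fun j => βhat j - βstar j) ≤ r :=
  statement10_general y Xt w' βstar hs lamo lams hlamo βhat hmin ra1 ra2 hra1 hra2 hgrad hCs1 b1 rb1
    rb2 hb1 hrb1 hrb2 hlower r hrlow

end RobustSparse
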